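/- arXiv:1309.2837 — 2 statements merged into one kernel-verified Lean document; each statement's English description precedes it below -/
import Mathlib

section
/- In one space dimension on the interval (0,1) with boundary conditions θ(0)=θ(1)=0, for the stationary Frank-Kamenetskii problem θ'' + F_K e^θ = 0 there exists a critical value F_c > 0 such that for F_K > F_c no C² solution exists. -/
/-- A solution of the 1D stationary Frank-Kamenetskii problem with parameter `F`. -/
def IsFKSolution (F : ℝ) (θ : ℝ → ℝ) : Prop :=
  ContDiff ℝ 2 θ ∧ θ 0 = 0 ∧ θ 1 = 0 ∧
    ∀ x ∈ Set.Ioo (0 : ℝ) 1, deriv (deriv θ) x + F * Real.exp (θ x) = 0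

open intervalIntegral Set MeasureTheory Real

set_option maxHeartbeats 2000000 in
/-- There is a critical value `F_c > 0` such that for `F_K > F_c` the 1D
stationary Frank-Kamenetskii problem `θ'' + F_K e^θ = 0`, `θ(0)=θ(1)=0`,
has no C² solution (heat explosion). -/
theorem fk_no_solution_for_large_FK :
    ∃ Fc : ℝ, 0 < Fc ∧ ∀ F : ℝ, Fc < F → ¬ ∃ θ : ℝ → ℝ, IsFKSolution F θ := by
  refine ⟨39, by norm_num, fun F hF hsol => ?_⟩
  obtain ⟨θ, hc2, h0, h1, hode⟩ := hsol
  have hF0 : (0:ℝ) < F := lt_trans (by norm_num) hF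
  -- smoothness facts
  have hcθ : Continuous θ := hc2.continuous
  have hd1 : Differentiable ℝ θ := hc2.differentiable (by norm_num)
  have h1' : ContDiff ℝ 1 (deriv θ) :=
    (contDiff_succ_iff_deriv.mp (by exact_mod_cast hc2 : ContDiff ℝ (1+1 : ℕ) θ)).2.2
  have hd2 : Differentiable ℝ (deriv θ) := h1'.differentiable (by norm_num)
  have hcd1 : Continuous (deriv θ) := hd2.continuous
  have hcd2 : Continuous (deriv (deriv θ)) := h1'.continuous_deriv le_rfl
  set c := θ (1/2) with hcdef
  -- derivative of the test function φ x = x (1 - x)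
  have hφc : Continuous (fun x : ℝ => x*(1-x)) := by fun_prop
  have hφd : ∀ x : ℝ, HasDerivAt (fun x : ℝ => x*(1-x)) (1 - 2*x) x := by
    intro x
    have h := (hasDerivAt_id x).mul ((hasDerivAt_const x (1:ℝ)).sub (hasDerivAt_id x))
    refine h.congr_deriv ?_
    simp only [id_eq, Pi.sub_apply]
    ring
  have hode' : ∀ x ∈ Ioo (0:ℝ) 1, deriv (deriv θ) x = -(F * Real.exp (θ x)) := by
    intro x hx
    have := hode x hx
    linarith
  -- θ is concave on [0,1]
  have hconc : ConcaveOn ℝ (Icc (0:ℝ) 1) θ := by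
    apply concaveOn_of_deriv2_nonpos (convex_Icc 0 1) hcθ.continuousOn
      hd1.differentiableOn hd2.differentiableOn
    intro x hx
    rw [interior_Icc] at hx
    have h2 : deriv^[2] θ x = deriv (deriv θ) x := rfl
    rw [h2, hode' x hx]
    have : 0 < F * Real.exp (θ x) := by positivity
    linarith
  -- θ ≥ 0 on [0,1]
  have hnn : ∀ x ∈ Icc (0:ℝ) 1, 0 ≤ θ x := by
    intro x hx
    have h := hconc.2 (show (0:ℝ) ∈ Icc (0:ℝ) 1 by norm_num)
      (show (1:ℝ) ∈ Icc (0:ℝ) 1 by norm_num)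
      (show (0:ℝ) ≤ 1 - x by linarith [hx.2]) hx.1 (by ring)
    simpa [h0, h1, smul_eq_mul, show (1-x)*0 + x*1 = x by ring] using h
  have hc0 : 0 ≤ c := hnn _ (by norm_num)
  -- upper bound:  θ y ≤ 2 c  on [0,1]
  have hub : ∀ y ∈ Icc (0:ℝ) 1, θ y ≤ 2 * c := by
    intro y hy
    rcases le_total y (1/2) with h12 | h12
    · have hy1 : (0:ℝ) < 2*(1-y) := by linarith
      have h := hconc.2 hy (show (1:ℝ) ∈ Icc (0:ℝ) 1 by norm_num)
        (show (0:ℝ) ≤ 1/(2*(1-y)) by positivity)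
        (show (0:ℝ) ≤ 1 - 1/(2*(1-y)) by
          rw [sub_nonneg, div_le_one hy1]; linarith)
        (by ring)
      rw [smul_eq_mul, smul_eq_mul, smul_eq_mul, smul_eq_mul, h1,
        show 1/(2*(1-y))*y + (1 - 1/(2*(1-y)))*1 = 1/2 by
          have : (1:ℝ) - y ≠ 0 := by linarith
          field_simp; ring] at h
      -- h : 1/(2*(1-y)) * θ y + _ * 0 ≤ c
      have h' : 1/(2*(1-y)) * θ y ≤ c := by linarith
      have h2 : θ y ≤ 2*(1-y)*c := by
        have := mul_le_mul_of_nonneg_left h' hy1.le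
        rw [show 2*(1-y) * (1/(2*(1-y)) * θ y) = θ y by
          have : (1:ℝ) - y ≠ 0 := by linarith
          field_simp] at this
        linarith
      nlinarith [mul_nonneg hc0 hy.1]
    · have hy1 : (0:ℝ) < 2*y := by linarith
      have h := hconc.2 (show (0:ℝ) ∈ Icc (0:ℝ) 1 by norm_num) hy
        (show (0:ℝ) ≤ 1 - 1/(2*y) by
          rw [sub_nonneg, div_le_one hy1]; linarith)
        (show (0:ℝ) ≤ 1/(2*y) by positivity)
        (by ring)
      rw [smul_eq_mul, smul_eq_mul, smul_eq_mul, smul_eq_mul, h0,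
        show (1 - 1/(2*y))*0 + 1/(2*y)*y = 1/2 by field_simp; ring] at h
      have h' : 1/(2*y) * θ y ≤ c := by linarith
      have h2 : θ y ≤ 2*y*c := by
        have := mul_le_mul_of_nonneg_left h' hy1.le
        rw [show 2*y * (1/(2*y) * θ y) = θ y by field_simp] at this
        linarith
      nlinarith [mul_nonneg hc0 (by linarith [hy.2] : (0:ℝ) ≤ 1 - y)]
  -- lower chord bounds
  have hlb1 : ∀ y ∈ Icc (0:ℝ) (1/2), 2*y*c ≤ θ y := by
    intro y hy
    have h := hconc.2 (show (0:ℝ) ∈ Icc (0:ℝ) 1 by norm_num)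
      (show (1/2:ℝ) ∈ Icc (0:ℝ) 1 by norm_num)
      (show (0:ℝ) ≤ 1 - 2*y by linarith [hy.2])
      (show (0:ℝ) ≤ 2*y by linarith [hy.1]) (by ring)
    rw [smul_eq_mul, smul_eq_mul, smul_eq_mul, smul_eq_mul, h0,
      show (1 - 2*y)*0 + 2*y*(1/2) = y by ring] at h
    linarith
  have hlb2 : ∀ y ∈ Icc (1/2:ℝ) 1, 2*(1-y)*c ≤ θ y := by
    intro y hy
    have h := hconc.2 (show (1:ℝ) ∈ Icc (0:ℝ) 1 by norm_num)
      (show (1/2:ℝ) ∈ Icc (0:ℝ) 1 by norm_num)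
      (show (0:ℝ) ≤ 2*y - 1 by linarith [hy.1])
      (show (0:ℝ) ≤ 2 - 2*y by linarith [hy.2]) (by ring)
    rw [smul_eq_mul, smul_eq_mul, smul_eq_mul, smul_eq_mul, h1,
      show (2*y - 1)*1 + (2 - 2*y)*(1/2) = y by ring] at h
    linarith
  -- integration by parts, twice
  have ibp1 : ∫ x in (0:ℝ)..1,
      (deriv (deriv θ) x * (x*(1-x)) + deriv θ x * (1 - 2*x)) = 0 := by
    have h := integral_deriv_mul_eq_sub (a := (0:ℝ)) (b := 1)
      (u := deriv θ) (v := fun x => x*(1-x))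
      (u' := deriv (deriv θ)) (v' := fun x => 1 - 2*x)
      (fun x _ => (hd2 x).hasDerivAt) (fun x _ => hφd x)
      (hcd2.intervalIntegrable 0 1)
      ((by fun_prop : Continuous fun x : ℝ => 1 - 2*x).intervalIntegrable 0 1)
    simpa using h
  have ibp2 : ∫ x in (0:ℝ)..1, (deriv θ x * (1 - 2*x) + θ x * (-2)) = 0 := by
    have hv : ∀ x : ℝ, HasDerivAt (fun x : ℝ => 1 - 2*x) (-2) x := by
      intro x
      have h := (hasDerivAt_const x (1:ℝ)).sub ((hasDerivAt_id x).const_mul 2)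
      refine h.congr_deriv ?_
      norm_num
    have h := integral_deriv_mul_eq_sub (a := (0:ℝ)) (b := 1)
      (u := θ) (v := fun x => 1 - 2*x)
      (u' := deriv θ) (v' := fun _ => (-2:ℝ))
      (fun x _ => (hd1 x).hasDerivAt) (fun x _ => hv x)
      (hcd1.intervalIntegrable 0 1) (intervalIntegrable_const)
    simpa [h0, h1] using h
  set A := ∫ x in (0:ℝ)..1, θ x with hA_def
  set B := ∫ x in (0:ℝ)..1, θ x * (x*(1-x)) with hB_def
  have hiθ : IntervalIntegrable θ volume 0 1 := hcθ.intervalIntegrable 0 1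
  have e2 : ∫ x in (0:ℝ)..1, deriv θ x * (1 - 2*x) = 2 * A := by
    rw [integral_add ((by fun_prop : Continuous fun x => deriv θ x * (1 - 2*x)).intervalIntegrable 0 1)
      ((by fun_prop : Continuous fun x => θ x * (-2:ℝ)).intervalIntegrable 0 1)] at ibp2
    have : ∫ x in (0:ℝ)..1, θ x * (-2) = A * (-2) := integral_mul_const _ _
    linarith
  have key1 : ∫ x in (0:ℝ)..1, deriv (deriv θ) x * (x*(1-x)) = -(2 * A) := by
    rw [integral_add ((by fun_prop : Continuous fun x => deriv (deriv θ) x * (x*(1-x))).intervalIntegrable 0 1)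
      ((by fun_prop : Continuous fun x => deriv θ x * (1 - 2*x)).intervalIntegrable 0 1)] at ibp1
    linarith
  have key2 : ∫ x in (0:ℝ)..1, deriv (deriv θ) x * (x*(1-x))
      = ∫ x in (0:ℝ)..1, (-(F * Real.exp (θ x))) * (x*(1-x)) := by
    apply integral_congr
    rw [uIcc_of_le (by norm_num : (0:ℝ) ≤ 1)]
    have hEq : EqOn (fun x => deriv (deriv θ) x * (x*(1-x)))
        (fun x => (-(F * Real.exp (θ x))) * (x*(1-x))) (Ioo 0 1) := by
      intro x hx
      simp only []
      rw [hode' x hx]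
    have h := hEq.closure (hcd2.mul hφc) (((continuous_const.mul (Real.continuous_exp.comp hcθ)).neg).mul hφc)
    rwa [closure_Ioo (by norm_num : (0:ℝ) ≠ 1)] at h
  have key3 : F * ∫ x in (0:ℝ)..1, Real.exp (θ x) * (x*(1-x)) = 2 * A := by
    have e : ∀ x : ℝ, (-(F * Real.exp (θ x))) * (x*(1-x))
        = (-F) * (Real.exp (θ x) * (x*(1-x))) := fun x => by ring
    have h : ∫ x in (0:ℝ)..1, (-(F * Real.exp (θ x))) * (x*(1-x))
        = (-F) * ∫ x in (0:ℝ)..1, Real.exp (θ x) * (x*(1-x)) := by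
      simp_rw [e]
      exact integral_const_mul _ _
    rw [key2, h] at key1
    linarith
  -- A ≤ 2 c
  have hA : A ≤ 2*c := by
    have h := integral_mono_on (μ := volume) (by norm_num : (0:ℝ) ≤ 1) hiθ
      ((continuous_const : Continuous fun _ : ℝ => 2*c).intervalIntegrable 0 1) hub
    simpa using h
  -- 1/6 + B ≤ ∫ e^θ φ
  have hexpB : 1/6 + B ≤ ∫ x in (0:ℝ)..1, Real.exp (θ x) * (x*(1-x)) := by
    have hmono : ∀ x ∈ Icc (0:ℝ) 1,
        (1 + θ x) * (x*(1-x)) ≤ Real.exp (θ x) * (x*(1-x)) := by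
      intro x hx
      have h1 : θ x + 1 ≤ Real.exp (θ x) := Real.add_one_le_exp _
      have h2 : 0 ≤ x*(1-x) := mul_nonneg hx.1 (by linarith [hx.2])
      nlinarith
    have h := integral_mono_on (μ := volume) (by norm_num : (0:ℝ) ≤ 1)
      ((by fun_prop : Continuous fun x => (1 + θ x) * (x*(1-x))).intervalIntegrable 0 1)
      ((by fun_prop : Continuous fun x => Real.exp (θ x) * (x*(1-x))).intervalIntegrable 0 1) hmono
    have hsplit : ∫ x in (0:ℝ)..1, (1 + θ x) * (x*(1-x))
        = (∫ x in (0:ℝ)..1, x*(1-x)) + B := by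
      simp_rw [add_mul, one_mul]
      rw [integral_add (hφc.intervalIntegrable 0 1)
        ((by fun_prop : Continuous fun x => θ x * (x*(1-x))).intervalIntegrable 0 1)]
    have hφint : ∫ x in (0:ℝ)..1, x*(1-x) = 1/6 := by
      have e : ∀ x : ℝ, x*(1-x) = x - x^2 := fun x => by ring
      simp_rw [e]
      rw [integral_sub ((by fun_prop : Continuous fun x : ℝ => x).intervalIntegrable 0 1)
        ((continuous_pow 2).intervalIntegrable 0 1)]
      simp [integral_pow, integral_id]
      norm_num
    rw [hsplit, hφint] at h
    linarith
  -- B ≥ 5/48 c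
  have hiθφ : ∀ a b : ℝ, IntervalIntegrable (fun x => θ x * (x*(1-x))) volume a b :=
    fun a b => (hcθ.mul hφc).intervalIntegrable a b
  have hB : 5/48 * c ≤ B := by
    have hBsplit : (∫ x in (0:ℝ)..(1/2), θ x * (x*(1-x)))
        + (∫ x in (1/2:ℝ)..1, θ x * (x*(1-x))) = B :=
      integral_add_adjacent_intervals (hiθφ 0 (1/2)) (hiθφ (1/2) 1)
    have hB1 : 5/96*c ≤ ∫ x in (0:ℝ)..(1/2), θ x * (x*(1-x)) := by
      have hm : ∀ x ∈ Icc (0:ℝ) (1/2), 2*x*c*(x*(1-x)) ≤ θ x * (x*(1-x)) := by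
        intro x hx
        have h2 : 0 ≤ x*(1-x) := mul_nonneg hx.1 (by linarith [hx.2])
        exact mul_le_mul_of_nonneg_right (hlb1 x hx) h2
      have h := integral_mono_on (μ := volume) (by norm_num : (0:ℝ) ≤ 1/2)
        ((by fun_prop : Continuous fun x : ℝ => 2*x*c*(x*(1-x))).intervalIntegrable 0 (1/2))
        (hiθφ 0 (1/2)) hm
      have hcomp : ∫ x in (0:ℝ)..(1/2), 2*x*c*(x*(1-x)) = 5/96*c := by
        have e : ∀ x : ℝ, 2*x*c*(x*(1-x)) = (2*c)*(x^2 - x^3) := fun x => by ring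
        simp_rw [e]
        rw [intervalIntegral.integral_const_mul, integral_sub ((continuous_pow 2).intervalIntegrable 0 (1/2))
          ((continuous_pow 3).intervalIntegrable 0 (1/2))]
        simp [integral_pow]
        ring
      linarith
    have hB2 : 5/96*c ≤ ∫ x in (1/2:ℝ)..1, θ x * (x*(1-x)) := by
      have hm : ∀ x ∈ Icc (1/2:ℝ) 1, 2*(1-x)*c*(x*(1-x)) ≤ θ x * (x*(1-x)) := by
        intro x hx
        have h2 : 0 ≤ x*(1-x) := mul_nonneg (by linarith [hx.1]) (by linarith [hx.2])
        exact mul_le_mul_of_nonneg_right (hlb2 x hx) h2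
      have h := integral_mono_on (μ := volume) (by norm_num : (1/2:ℝ) ≤ 1)
        ((by fun_prop : Continuous fun x : ℝ => 2*(1-x)*c*(x*(1-x))).intervalIntegrable (1/2) 1)
        (hiθφ (1/2) 1) hm
      have hcomp : ∫ x in (1/2:ℝ)..1, 2*(1-x)*c*(x*(1-x)) = 5/96*c := by
        have e : ∀ x : ℝ, 2*(1-x)*c*(x*(1-x)) = (2*c)*(x - 2*x^2 + x^3) := fun x => by ring
        simp_rw [e]
        rw [intervalIntegral.integral_const_mul]
        have hval : ∫ x in (1/2:ℝ)..1, (x - 2*x^2 + x^3) = 5/192 := by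
          rw [integral_add ((by fun_prop : Continuous fun x : ℝ => x - 2*x^2).intervalIntegrable (1/2) 1)
            ((continuous_pow 3).intervalIntegrable (1/2) 1),
            integral_sub ((by fun_prop : Continuous fun x : ℝ => x).intervalIntegrable (1/2) 1)
              ((by fun_prop : Continuous fun x : ℝ => 2*x^2).intervalIntegrable (1/2) 1),
            intervalIntegral.integral_const_mul]
          simp [integral_pow, integral_id]
          norm_num
        rw [hval]
        ring
      linarith
    linarith
  -- final contradiction
  have final : F * (1/6 + B) ≤ 2 * A := by
    calc F * (1/6 + B) ≤ F * ∫ x in (0:ℝ)..1, Real.exp (θ x) * (x*(1-x)) :=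
          mul_le_mul_of_nonneg_left hexpB hF0.le
      _ = 2 * A := key3
  nlinarith [mul_le_mul_of_nonneg_left hB hF0.le,
    mul_nonneg (by linarith : (0:ℝ) ≤ F - 39) hc0]
end

section
/- If θ ∈ C²([0,1]) satisfies θ'' + F_K e^θ = 0, θ(0)=θ(1)=0, then F_K ∫₀¹ e^θ φ dx = ∫₀¹ θ (−φ'') dx for every φ ∈ C²([0,1]) with φ(0)=φ(1)=0; taking φ(x) = sin(πx) and using e^θ ≥ e·θ, it follows that existence of such a solution implies F_K ≤ π²/e. -/
open intervalIntegral Real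

/-- Integration by parts on `[0,1]` for `C¹` functions. -/
lemma fk_ibp (u v : ℝ → ℝ) (hu : ContDiff ℝ 1 u) (hv : ContDiff ℝ 1 v) :
    ∫ x in (0 : ℝ)..1, u x * deriv v x
      = u 1 * v 1 - u 0 * v 0 - ∫ x in (0 : ℝ)..1, deriv u x * v x := by
  apply intervalIntegral.integral_mul_deriv_eq_deriv_mul
  · intro x _
    exact ((hu.differentiable one_ne_zero) x).hasDerivAt
  · intro x _
    exact ((hv.differentiable one_ne_zero) x).hasDerivAt
  · exact (hu.continuous_deriv le_rfl).intervalIntegrable 0 1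
  · exact (hv.continuous_deriv le_rfl).intervalIntegrable 0 1

/-- `e·t ≤ e^t` for all real `t`. -/
lemma fk_exp_lower (t : ℝ) : Real.exp 1 * t ≤ Real.exp t := by
  have h := Real.add_one_le_exp (t - 1)
  have := mul_le_mul_of_nonneg_left h (Real.exp_pos 1).le
  calc Real.exp 1 * t = Real.exp 1 * (t - 1 + 1) := by ring
    _ ≤ Real.exp 1 * Real.exp (t - 1) := this
    _ = Real.exp t := by rw [← Real.exp_add]; ring_nf

/-- Weak formulation of the 1D Frank-Kamenetskii problem and the resulting
necessary condition: testing `θ'' + F e^θ = 0`, `θ(0)=θ(1)=0`, against any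
`φ ∈ C²` with `φ(0)=φ(1)=0` gives `F ∫ e^θ φ = ∫ θ (−φ'')`; and existence of
a solution implies `F ≤ π²/e`. -/
theorem fk_weak_formulation_and_threshold (F : ℝ) (hF : 0 < F)
    (θ : ℝ → ℝ) (hθ : ContDiff ℝ 2 θ) (h0 : θ 0 = 0) (h1 : θ 1 = 0)
    (heq : ∀ x ∈ Set.Ioo (0 : ℝ) 1,
      deriv (deriv θ) x + F * Real.exp (θ x) = 0) :
    (∀ φ : ℝ → ℝ, ContDiff ℝ 2 φ → φ 0 = 0 → φ 1 = 0 →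
      F * ∫ x in (0 : ℝ)..1, Real.exp (θ x) * φ x
        = ∫ x in (0 : ℝ)..1, θ x * (-(deriv (deriv φ) x))) ∧
    F ≤ π ^ 2 / Real.exp 1 := by
  -- regularity facts
  have hθ1 : ContDiff ℝ 1 (deriv θ) := ((contDiff_succ_iff_deriv (n := 1)).mp hθ).2.2
  have hθC : Continuous θ := hθ.continuous
  have hθ'' : Continuous (deriv (deriv θ)) := hθ1.continuous_deriv le_rfl
  -- the ODE holds on all of [0,1] by continuity
  have heqIcc : ∀ x ∈ Set.Icc (0 : ℝ) 1, deriv (deriv θ) x = -(F * Real.exp (θ x)) := by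
    have hcl : Set.EqOn (deriv (deriv θ)) (fun x => -(F * Real.exp (θ x)))
        (closure (Set.Ioo (0 : ℝ) 1)) := by
      apply Set.EqOn.closure _ hθ'' (by continuity)
      intro x hx
      have := heq x hx
      show deriv (deriv θ) x = -(F * Real.exp (θ x))
      linarith
    rw [closure_Ioo (by norm_num : (0 : ℝ) ≠ 1)] at hcl
    exact hcl
  -- weak formulation
  have weak : ∀ φ : ℝ → ℝ, ContDiff ℝ 2 φ → φ 0 = 0 → φ 1 = 0 →
      F * ∫ x in (0 : ℝ)..1, Real.exp (θ x) * φ x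
        = ∫ x in (0 : ℝ)..1, θ x * (-(deriv (deriv φ) x)) := by
    intro φ hφ hφ0 hφ1
    have hφ1' : ContDiff ℝ 1 (deriv φ) := ((contDiff_succ_iff_deriv (n := 1)).mp hφ).2.2
    have hφC1 : ContDiff ℝ 1 φ := hφ.of_le (by norm_num)
    have hθC1 : ContDiff ℝ 1 θ := hθ.of_le (by norm_num)
    -- IBP twice
    have ibp1 : ∫ x in (0 : ℝ)..1, φ x * deriv (deriv θ) x
        = - ∫ x in (0 : ℝ)..1, deriv φ x * deriv θ x := by
      rw [fk_ibp φ (deriv θ) hφC1 hθ1, hφ0, hφ1]; ring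
    have ibp2 : ∫ x in (0 : ℝ)..1, θ x * deriv (deriv φ) x
        = - ∫ x in (0 : ℝ)..1, deriv θ x * deriv φ x := by
      rw [fk_ibp θ (deriv φ) hθC1 hφ1', h0, h1]; ring
    have hcomm : ∫ x in (0 : ℝ)..1, deriv φ x * deriv θ x
        = ∫ x in (0 : ℝ)..1, deriv θ x * deriv φ x := by
      apply intervalIntegral.integral_congr
      intro x _; exact mul_comm _ _
    have step1 : F * ∫ x in (0 : ℝ)..1, Real.exp (θ x) * φ x
        = ∫ x in (0 : ℝ)..1, -(φ x * deriv (deriv θ) x) := by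
      rw [← intervalIntegral.integral_const_mul]
      apply intervalIntegral.integral_congr
      intro x hx
      rw [Set.uIcc_of_le (by norm_num : (0:ℝ) ≤ 1)] at hx
      have := heqIcc x hx
      simp only [this]
      ring
    have step2 : ∫ x in (0 : ℝ)..1, θ x * (-(deriv (deriv φ) x))
        = - ∫ x in (0 : ℝ)..1, θ x * deriv (deriv φ) x := by
      rw [← intervalIntegral.integral_neg]
      apply intervalIntegral.integral_congr
      intro x _; ring
    rw [step1, step2, intervalIntegral.integral_neg, ibp1, ibp2, hcomm]
  refine ⟨weak, ?_⟩
  -- take φ = sin (π x)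
  set φ : ℝ → ℝ := fun x => Real.sin (π * x) with hφdef
  have hφ : ContDiff ℝ 2 φ :=
    Real.contDiff_sin.comp (contDiff_const.mul contDiff_id)
  have hφ0 : φ 0 = 0 := by simp [hφdef]
  have hφ1 : φ 1 = 0 := by simp [hφdef]
  have hd1 : deriv φ = fun x => π * Real.cos (π * x) := by
    funext x
    have h : HasDerivAt φ (Real.cos (π * x) * π) x := by
      have hlin : HasDerivAt (fun x : ℝ => π * x) π x := by
        simpa using (hasDerivAt_id x).const_mul π
      exact (Real.hasDerivAt_sin (π * x)).comp x hlin
    rw [h.deriv]; ring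
  have hd2 : ∀ x, deriv (deriv φ) x = -(π ^ 2 * Real.sin (π * x)) := by
    intro x
    rw [hd1]
    have hlin : HasDerivAt (fun x : ℝ => π * x) π x := by
      simpa using (hasDerivAt_id x).const_mul π
    have h : HasDerivAt (fun x => π * Real.cos (π * x)) (π * (-Real.sin (π * x) * π)) x :=
      (((Real.hasDerivAt_cos (π * x)).comp x hlin)).const_mul π
    rw [h.deriv]; ring
  have key := weak φ hφ hφ0 hφ1
  -- rewrite RHS as π² ∫ θ sin
  have hrhs : ∫ x in (0 : ℝ)..1, θ x * (-(deriv (deriv φ) x))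
      = π ^ 2 * ∫ x in (0 : ℝ)..1, θ x * Real.sin (π * x) := by
    rw [← intervalIntegral.integral_const_mul]
    apply intervalIntegral.integral_congr
    intro x _
    simp only [hd2]; ring
  rw [hrhs] at key
  set I : ℝ := ∫ x in (0 : ℝ)..1, θ x * Real.sin (π * x) with hI
  set J : ℝ := ∫ x in (0 : ℝ)..1, Real.exp (θ x) * Real.sin (π * x) with hJ
  have keyIJ : F * J = π ^ 2 * I := key
  have hsin_nonneg : ∀ x ∈ Set.Icc (0 : ℝ) 1, 0 ≤ Real.sin (π * x) := by
    intro x hx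
    apply Real.sin_nonneg_of_nonneg_of_le_pi
    · exact mul_nonneg Real.pi_pos.le hx.1
    · nlinarith [mul_nonneg Real.pi_pos.le (sub_nonneg.mpr hx.2)]
  have hJpos : 0 < J := by
    apply intervalIntegral.intervalIntegral_pos_of_pos_on
    · exact ((Real.continuous_exp.comp hθC).mul
        (Real.continuous_sin.comp (continuous_const.mul continuous_id))).intervalIntegrable 0 1
    · intro x hx
      have hs : 0 < Real.sin (π * x) := by
        apply Real.sin_pos_of_pos_of_lt_pi
        · exact mul_pos Real.pi_pos hx.1
        · nlinarith [mul_pos Real.pi_pos (sub_pos.mpr hx.2)]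
      exact mul_pos (Real.exp_pos _) hs
    · norm_num
  have hIpos : 0 < I := by
    nlinarith [Real.pi_pos]
  -- e I ≤ J
  have hmono : Real.exp 1 * I ≤ J := by
    rw [hI, ← intervalIntegral.integral_const_mul]
    apply intervalIntegral.integral_mono_on (by norm_num)
    · exact (continuous_const.mul (hθC.mul
        (Real.continuous_sin.comp (continuous_const.mul continuous_id)))).intervalIntegrable 0 1
    · exact ((Real.continuous_exp.comp hθC).mul
        (Real.continuous_sin.comp (continuous_const.mul continuous_id))).intervalIntegrable 0 1
    · intro x hx
      have hs := hsin_nonneg x hx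
      have := fk_exp_lower (θ x)
      calc Real.exp 1 * (θ x * Real.sin (π * x))
          = (Real.exp 1 * θ x) * Real.sin (π * x) := by ring
        _ ≤ Real.exp (θ x) * Real.sin (π * x) := mul_le_mul_of_nonneg_right this hs
  -- conclude
  have hFe : F * Real.exp 1 ≤ π ^ 2 := by
    have h1' : F * (Real.exp 1 * I) ≤ F * J := mul_le_mul_of_nonneg_left hmono hF.le
    rw [keyIJ] at h1'
    nlinarith
  rw [le_div_iff₀ (Real.exp_pos 1)]
  exact hFe
end
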